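/- arXiv:1909.04255 — 5 statements merged into one kernel-verified Lean document; each statement's English description precedes it below -/
import Mathlib

section
/- Let M ≥ 1, let α, β ∈ (0,∞)^M, and let p ∈ (0,1)^M with Σ_{i=1}^M p_i = 1. Let (x_k)_{k≥1} be a sequence of vectors in ℕ^M such that for every i, [x_k]_i / k → p_i as k → ∞. Then lim_{k→∞} (Γ(k + Σ_i β_i)/Γ(k + Σ_i α_i)) · ∏_{i=1}^M (Γ([x_k]_i + α_i)/Γ([x_k]_i + β_i)) = ∏_{i=1}^M p_i^{α_i − β_i}. -/
/-!
Euler's limit formula `GammaSeq a n → Γ(a)` says exactly that `Γ(n + a) ~ n ^ a Γ(n)` along the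
integers, hence `Γ(n + a) / Γ(n + b) ~ n ^ (a - b)`. Every `x k i` tends to infinity because
`p i > 0`, so with `A = ∑ α i` and `B = ∑ β i` the whole expression is asymptotic to
`k ^ (B - A) ∏ i, x k i ^ (α i - β i) = ∏ i, (x k i / k) ^ (α i - β i)`.
-/

open Filter Asymptotics Nat

namespace Real

lemma Gamma_add_nat_eq_mul_prod {a : ℝ} (ha : 0 < a) (n : ℕ) :
    Gamma (a + n) = Gamma a * ∏ j ∈ Finset.range n, (a + j) := by
  induction n with
  | zero => simp
  | succ n ih =>
    rw [Nat.cast_succ, ← add_assoc, Gamma_add_one (by positivity), ih, Finset.prod_range_succ]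
    ring

lemma GammaSeq_eq_of_pos {a : ℝ} (ha : 0 < a) (n : ℕ) :
    GammaSeq a n = n ^ a * n ! * Gamma a / ((a + n) * Gamma (a + n)) := by
  have hΓ : Gamma a ≠ 0 := (Gamma_pos_of_pos ha).ne'
  rw [GammaSeq, Finset.prod_range_succ, Gamma_add_nat_eq_mul_prod ha]
  field_simp

lemma isEquivalent_Gamma_nat_add {a : ℝ} (ha : 0 < a) :
    (fun n : ℕ => Gamma (n + a)) ~[atTop] fun n => n ^ a * Gamma n := by
  have hΓ : Gamma a ≠ 0 := (Gamma_pos_of_pos ha).ne'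
  have hseq : Tendsto (fun n : ℕ => Gamma a / GammaSeq a n) atTop (nhds 1) := by
    have h := (tendsto_const_nhds (x := Gamma a)).div (GammaSeq_tendsto_Gamma a) hΓ
    rwa [div_self hΓ] at h
  refine isEquivalent_of_tendsto_one ?_
  have h := (tendsto_natCast_div_add_atTop a).mul hseq
  rw [mul_one] at h
  refine h.congr' ?_
  filter_upwards [eventually_gt_atTop 0] with n hn
  have hn' : (0 : ℝ) < n := by exact_mod_cast hn
  have : Gamma n ≠ 0 := (Gamma_pos_of_pos hn').ne'
  have : Gamma (a + n) ≠ 0 := (Gamma_pos_of_pos (by positivity)).ne'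
  have : (n : ℝ) ^ a ≠ 0 := (rpow_pos_of_pos hn' a).ne'
  have hfac : (n ! : ℝ) = n * Gamma n := by
    rw [← Gamma_nat_eq_factorial, Gamma_add_one hn'.ne']
  simp only [Pi.div_apply, GammaSeq_eq_of_pos ha, hfac, add_comm (n : ℝ) a]
  field_simp

lemma isEquivalent_Gamma_nat_add_div_Gamma_nat_add {a b : ℝ} (ha : 0 < a) (hb : 0 < b) :
    (fun n : ℕ => Gamma (n + a) / Gamma (n + b)) ~[atTop] fun n => (n : ℝ) ^ (a - b) := by
  refine ((isEquivalent_Gamma_nat_add ha).div (isEquivalent_Gamma_nat_add hb)).trans_eventuallyEq ?_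
  filter_upwards [eventually_gt_atTop 0] with n hn
  have hn' : (0 : ℝ) < n := by exact_mod_cast hn
  have := (Gamma_pos_of_pos hn').ne'
  simp only [Pi.div_apply, rpow_sub hn']
  field_simp

end Real

open Real

lemma tendsto_atTop_of_tendsto_div_natCast {u : ℕ → ℕ} {c : ℝ} (hc : 0 < c)
    (hu : Tendsto (fun k => (u k : ℝ) / k) atTop (nhds c)) : Tendsto u atTop atTop := by
  rw [← tendsto_natCast_atTop_iff (R := ℝ)]
  refine (hu.pos_mul_atTop hc tendsto_natCast_atTop_atTop).congr' ?_
  filter_upwards [eventually_ne_atTop 0] with k hk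
  field_simp

lemma Finset.prod_div_rpow {ι : Type*} (s : Finset ι) {y c : ι → ℝ} {t : ℝ}
    (hy : ∀ i ∈ s, 0 ≤ y i) (ht : 0 < t) :
    ∏ i ∈ s, (y i / t) ^ c i = (∏ i ∈ s, y i ^ c i) / t ^ ∑ i ∈ s, c i := by
  rw [Finset.prod_congr rfl fun i hi => div_rpow (hy i hi) ht.le (c i), Finset.prod_div_distrib,
    rpow_sum_of_pos ht]

theorem gamma_product_ratio_tendsto_general (M : ℕ) (hM : 1 ≤ M) (α β : Fin M → ℝ)
    (hα : ∀ i, 0 < α i) (hβ : ∀ i, 0 < β i)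
    (p : Fin M → ℝ) (hp : ∀ i, 0 < p i ∧ p i < 1)
    (x : ℕ → Fin M → ℕ)
    (hx : ∀ i, Tendsto (fun k : ℕ => (x k i : ℝ) / (k : ℝ)) atTop (nhds (p i))) :
    Tendsto (fun k : ℕ =>
        (Real.Gamma ((k : ℝ) + ∑ i, β i) / Real.Gamma ((k : ℝ) + ∑ i, α i)) *
          ∏ i, Real.Gamma ((x k i : ℝ) + α i) / Real.Gamma ((x k i : ℝ) + β i))
      atTop (nhds (∏ i, p i ^ (α i - β i))) := by
  have : Nonempty (Fin M) := Fin.pos_iff_nonempty.mp hM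
  have hA : 0 < ∑ i, α i := Finset.sum_pos (fun i _ => hα i) Finset.univ_nonempty
  have hB : 0 < ∑ i, β i := Finset.sum_pos (fun i _ => hβ i) Finset.univ_nonempty
  have hequiv := (isEquivalent_Gamma_nat_add_div_Gamma_nat_add hB hA).mul
    (IsEquivalent.finsetProd (s := Finset.univ) fun i _ =>
      (isEquivalent_Gamma_nat_add_div_Gamma_nat_add (hα i) (hβ i)).comp_tendsto
        (tendsto_atTop_of_tendsto_div_natCast (hp i).1 (hx i)))
  refine hequiv.symm.tendsto_nhds ?_
  refine (tendsto_finsetProd _ fun i _ => (hx i).rpow_const (Or.inl (hp i).1.ne')).congr' ?_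
  filter_upwards [eventually_gt_atTop 0] with k hk
  have hk' : (0 : ℝ) < k := by exact_mod_cast hk
  rw [Finset.prod_div_rpow _ (fun i _ => (x k i).cast_nonneg) hk', Finset.sum_sub_distrib,
    div_eq_mul_inv, ← rpow_neg hk'.le, neg_sub, mul_comm]
  rfl

/-- Deterministic limit for the ratio of Gamma-function products appearing in the
ratio of two Dirichlet-Multinomial pmfs: if `x k i / k → p i` for every `i`, then
`(Γ(k + Σ β)/Γ(k + Σ α)) · ∏ i, Γ(x k i + α i)/Γ(x k i + β i) → ∏ i, p i ^ (α i - β i)`. -/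
theorem gamma_product_ratio_tendsto (M : ℕ) (hM : 1 ≤ M) (α β : Fin M → ℝ)
    (hα : ∀ i, 0 < α i) (hβ : ∀ i, 0 < β i)
    (p : Fin M → ℝ) (hp : ∀ i, 0 < p i ∧ p i < 1) (hpsum : ∑ i, p i = 1)
    (x : ℕ → Fin M → ℕ)
    (hx : ∀ i, Tendsto (fun k : ℕ => (x k i : ℝ) / (k : ℝ)) atTop (nhds (p i))) :
    Tendsto (fun k : ℕ =>
        (Real.Gamma ((k : ℝ) + ∑ i, β i) / Real.Gamma ((k : ℝ) + ∑ i, α i)) *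
          ∏ i, Real.Gamma ((x k i : ℝ) + α i) / Real.Gamma ((x k i : ℝ) + β i))
      atTop (nhds (∏ i, p i ^ (α i - β i))) :=
  gamma_product_ratio_tendsto_general M hM α β hα hβ p hp x hx
end

section
/- Let M ≥ 1, let p ∈ (0,1)^M with Σ_{i=1}^M p_i = 1, and let Z ∈ ℕ^M be a fixed vector of prior-evidence counts. Let S_1, S_2, ... be an i.i.d. sequence of random variables with values in {1,...,M} and P(S_k = i) = p_i, and let N_k ∈ ℕ^M be the count vector [N_k]_i = #{t ≤ k : S_t = i}. Then, almost surely, lim_{k→∞} Λ(N_k | Z) = (Beta(1)/Beta(Z + 1)) · ∏_{i=1}^M p_i^{Z_i}, where 1 denotes the all-ones vector in ℕ^M. -/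
/-!
Since `Γ(n + 1) = n!`, with `k = ∑ i, N i` and rising factorials `x⁽ʲ⁾ = x (x + 1) ⋯ (x + j - 1)`,
`Λ(N | Z) = Beta(1) / Beta(Z + 1) · ∏ i, (N i + 1)⁽ᶻⁱ⁾ / (k + M)⁽ˢ⁾` where `s = ∑ i, Z i`.
Dividing numerator and denominator by `k ^ s`, the `i`-th factor behaves like `(N i / k) ^ Z i`,
which tends to `p i ^ Z i` almost surely by the strong law of large numbers applied to the
indicators of `{S t = i}`, while the denominator tends to `1`.
-/

open Filter MeasureTheory ProbabilityTheory

/-- The multivariate Beta function `Beta(α) = (∏ i, Γ(α i)) / Γ(∑ i, α i)`. -/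
noncomputable def mBeta {M : ℕ} (α : Fin M → ℝ) : ℝ :=
  (∏ i, Real.Gamma (α i)) / Real.Gamma (∑ i, α i)

/-- The uncertain likelihood ratio for prior-evidence counts `Z ∈ ℕ^M` and
count vector `N ∈ ℕ^M`:
`Λ(N | Z) = Beta(Z + N + 1)·Beta(1) / (Beta(Z + 1)·Beta(N + 1))`. -/
noncomputable def uncertainLikelihoodRatio {M : ℕ} (N Z : Fin M → ℕ) : ℝ :=
  (mBeta (fun i => ((Z i : ℝ) + (N i : ℝ) + 1)) * mBeta (fun _ : Fin M => (1 : ℝ))) /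
    (mBeta (fun i => ((Z i : ℝ) + 1)) * mBeta (fun i => ((N i : ℝ) + 1)))

open Finset
open scoped Nat Topology

lemma card_filter_Icc_one_eq_card_filter_range {p : ℕ → Prop} [DecidablePred p] (k : ℕ) :
    #{t ∈ Icc 1 k | p t} = #{t ∈ range k | p (t + 1)} := by
  rw [card_filter, card_filter, range_eq_Ico, sum_Ico_add' (fun t => if p t then 1 else 0),
    zero_add, Ico_add_one_right_eq_Icc]

theorem ae_tendsto_card_filter_range_div {Ω α : Type*} [MeasurableSpace Ω] [MeasurableSpace α]
    {P : Measure Ω} [IsFiniteMeasure P] {X : ℕ → Ω → α}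
    (hindep : Pairwise fun i j => IndepFun (X i) (X j) P)
    (hident : ∀ n, IdentDistrib (X n) (X 0) P P) {s : Set α} [DecidablePred (· ∈ s)]
    (hs : MeasurableSet s) :
    ∀ᵐ ω ∂P, Tendsto (fun n : ℕ => (#{t ∈ range n | X t ω ∈ s} : ℝ) / n) atTop
      (𝓝 (P.real (X 0 ⁻¹' s))) := by
  set f : α → ℝ := s.indicator 1
  have hf : Measurable f := measurable_const.indicator hs
  have hX₀ : AEMeasurable (X 0) P := (hident 0).aemeasurable_fst
  have hmean : P[f ∘ X 0] = P.real (X 0 ⁻¹' s) := by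
    rw [Function.comp_def, ← integral_map hX₀ hf.aestronglyMeasurable, integral_indicator_one hs,
      measureReal_def, Measure.map_apply_of_aemeasurable hX₀ hs, measureReal_def]
  have hslln := strong_law_ae_real (fun n => f ∘ X n)
    (((integrable_const 1).indicator hs).comp_aemeasurable hX₀)
    (fun i j hij => (hindep hij).comp hf hf) (fun n => (hident n).comp hf)
  rw [hmean] at hslln
  filter_upwards [hslln] with ω hω
  convert hω using 3 with n
  rw [natCast_card_filter]
  simp only [f, Function.comp_apply, Set.indicator_apply, Pi.one_apply]

lemma mBeta_natCast_add_one {m : ℕ} (f : Fin (m + 1) → ℕ) :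
    mBeta (fun i => (f i : ℝ) + 1) = (∏ i, ((f i)! : ℝ)) / ((∑ i, f i + m)! : ℝ) := by
  have hsum : ∑ i, ((f i : ℝ) + 1) = ((∑ i, f i + m : ℕ) : ℝ) + 1 := by
    push_cast
    rw [sum_add_distrib, sum_const, card_univ, Fintype.card_fin]
    ring
  simp only [mBeta, hsum, Real.Gamma_nat_eq_factorial]

lemma mBeta_add_div_mBeta {m : ℕ} (N Z : Fin (m + 1) → ℕ) :
    mBeta (fun i => (Z i : ℝ) + N i + 1) / mBeta (fun i => (N i : ℝ) + 1) =
      (∏ i, ((N i + 1).ascFactorial (Z i) : ℝ)) /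
        ((∑ i, N i + m + 1).ascFactorial (∑ i, Z i) : ℝ) := by
  have hcast : (fun i => (Z i : ℝ) + N i + 1) = fun i => ((N i + Z i : ℕ) : ℝ) + 1 := by
    ext i; push_cast; ring
  have hfac (n k : ℕ) : ((n + k)! : ℝ) = n ! * (n + 1).ascFactorial k := by
    exact_mod_cast (Nat.factorial_mul_ascFactorial n k).symm
  have hsum : ∑ i, (N i + Z i) + m = (∑ i, N i + m) + ∑ i, Z i := by
    rw [sum_add_distrib]; ring
  rw [hcast, mBeta_natCast_add_one, mBeta_natCast_add_one, hsum]
  simp only [hfac, prod_mul_distrib]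
  field_simp

lemma uncertainLikelihoodRatio_eq {m : ℕ} (N Z : Fin (m + 1) → ℕ) :
    uncertainLikelihoodRatio N Z =
      mBeta (fun _ : Fin (m + 1) => (1 : ℝ)) / mBeta (fun i => (Z i : ℝ) + 1) *
        ((∏ i, ((N i + 1).ascFactorial (Z i) : ℝ)) /
          ((∑ i, N i + m + 1).ascFactorial (∑ i, Z i) : ℝ)) := by
  rw [← mBeta_add_div_mBeta, uncertainLikelihoodRatio]
  ring

lemma tendsto_ascFactorial_div_pow {a : ℕ → ℕ} {q : ℝ}
    (ha : Tendsto (fun k => (a k : ℝ) / k) atTop (𝓝 q)) (c z : ℕ) :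
    Tendsto (fun k => ((a k + c).ascFactorial z : ℝ) / k ^ z) atTop (𝓝 (q ^ z)) := by
  have hpow (x : ℝ) : x ^ z = ∏ _j ∈ range z, x := by rw [prod_const, card_range]
  have hfactor (k : ℕ) : ((a k + c).ascFactorial z : ℝ) / k ^ z =
      ∏ j ∈ range z, ((a k : ℝ) / k + ((c + j : ℕ) : ℝ) / k) := by
    rw [Nat.ascFactorial_eq_prod_range, Nat.cast_prod, hpow, ← prod_div_distrib]
    refine prod_congr rfl fun j _ => ?_
    push_cast
    ring
  simp only [hfactor, hpow q]
  refine tendsto_finsetProd _ fun j _ => ?_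
  simpa using ha.add (tendsto_const_div_atTop_nhds_zero_nat ((c + j : ℕ) : ℝ))

lemma tendsto_natCast_div_self : Tendsto (fun k : ℕ => (k : ℝ) / k) atTop (𝓝 1) :=
  tendsto_const_nhds.congr' <| (eventually_ne_atTop 0).mono fun k hk => by simp [hk]

lemma tendsto_uncertainLikelihoodRatio {m : ℕ} (Z : Fin (m + 1) → ℕ) {q : Fin (m + 1) → ℝ}
    {a : ℕ → Fin (m + 1) → ℕ} (ha : ∀ i, Tendsto (fun k => (a k i : ℝ) / k) atTop (𝓝 (q i)))
    (hsum : ∀ k, ∑ i, a k i = k) :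
    Tendsto (fun k => uncertainLikelihoodRatio (a k) Z) atTop
      (𝓝 (mBeta (fun _ : Fin (m + 1) => (1 : ℝ)) / mBeta (fun i => (Z i : ℝ) + 1) *
        ∏ i, q i ^ Z i)) := by
  have hnum := tendsto_finsetProd univ fun i _ => tendsto_ascFactorial_div_pow (ha i) 1 (Z i)
  have hden := tendsto_ascFactorial_div_pow tendsto_natCast_div_self (m + 1) (∑ i, Z i)
  rw [one_pow] at hden
  have hratio := hnum.div hden one_ne_zero
  rw [div_one] at hratio
  simp only [uncertainLikelihoodRatio_eq, hsum, add_assoc]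
  refine tendsto_const_nhds.mul (hratio.congr' ?_)
  filter_upwards [eventually_ne_atTop 0] with k hk
  rw [Pi.div_apply, prod_div_distrib, prod_pow_eq_pow_sum,
    div_div_div_cancel_right₀ (by positivity)]

theorem uncertainLikelihoodRatio_tendsto_ae_general
    (M : ℕ) (hM : 1 ≤ M) (p : Fin M → ℝ) (hp : ∀ i, 0 < p i ∧ p i < 1)
    (Z : Fin M → ℕ)
    {Ω : Type*} [MeasurableSpace Ω] (P : Measure Ω) [IsProbabilityMeasure P]
    (S : ℕ → Ω → Fin M) (hSmeas : ∀ k, Measurable (S k))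
    (hSindep : iIndepFun S P)
    (hSdist : ∀ k i, P {ω | S k ω = i} = ENNReal.ofReal (p i))
    (N : ℕ → Ω → Fin M → ℕ)
    (hN : ∀ k ω i, N k ω i = ((Finset.Icc 1 k).filter (fun t => S t ω = i)).card) :
    ∀ᵐ ω ∂P, Tendsto (fun k => uncertainLikelihoodRatio (N k ω) Z) atTop
      (nhds ((mBeta (fun _ : Fin M => (1 : ℝ)) / mBeta (fun i => ((Z i : ℝ) + 1))) *
        ∏ i, p i ^ (Z i))) := by
  obtain ⟨m, rfl⟩ : ∃ m, M = m + 1 := ⟨M - 1, by omega⟩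
  have hident (k : ℕ) : IdentDistrib (S (k + 1)) (S 1) P P :=
    ⟨(hSmeas _).aemeasurable, (hSmeas _).aemeasurable, Measure.ext_of_singleton fun i => by
      rw [Measure.map_apply (hSmeas _) (measurableSet_singleton i),
        Measure.map_apply (hSmeas _) (measurableSet_singleton i)]
      exact (hSdist _ i).trans (hSdist 1 i).symm⟩
  have hfreq (i : Fin (m + 1)) :
      ∀ᵐ ω ∂P, Tendsto (fun k => (N k ω i : ℝ) / k) atTop (𝓝 (p i)) := by
    have hpi : P.real (S 1 ⁻¹' {i}) = p i := by
      rw [measureReal_def, show S 1 ⁻¹' {i} = {ω | S 1 ω = i} from rfl, hSdist,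
        ENNReal.toReal_ofReal (hp i).1.le]
    filter_upwards [ae_tendsto_card_filter_range_div (X := fun k => S (k + 1))
      (fun j k hjk => hSindep.indepFun (by omega)) hident (measurableSet_singleton i)] with ω hω
    simpa only [hN, card_filter_Icc_one_eq_card_filter_range, Set.mem_singleton_iff, hpi] using hω
  filter_upwards [ae_all_iff.2 hfreq] with ω hω
  refine tendsto_uncertainLikelihoodRatio Z hω fun k => ?_
  simp only [hN, sum_card_fiberwise_eq_card_filter, mem_univ, filter_true, Nat.card_Icc,
    Nat.add_sub_cancel]

/-- For i.i.d. signals with distribution `p` and empirical count vectors `N k`, the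
uncertain likelihood ratio converges almost surely:
`Λ(N k | Z) → (Beta(1)/Beta(Z + 1)) · ∏ i, p i ^ (Z i)`. -/
theorem uncertainLikelihoodRatio_tendsto_ae
    (M : ℕ) (hM : 1 ≤ M) (p : Fin M → ℝ) (hp : ∀ i, 0 < p i ∧ p i < 1) (hpsum : ∑ i, p i = 1)
    (Z : Fin M → ℕ)
    {Ω : Type*} [MeasurableSpace Ω] (P : Measure Ω) [IsProbabilityMeasure P]
    (S : ℕ → Ω → Fin M) (hSmeas : ∀ k, Measurable (S k))
    (hSindep : iIndepFun S P)
    (hSdist : ∀ k i, P {ω | S k ω = i} = ENNReal.ofReal (p i))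
    (N : ℕ → Ω → Fin M → ℕ)
    (hN : ∀ k ω i, N k ω i = ((Finset.Icc 1 k).filter (fun t => S t ω = i)).card) :
    ∀ᵐ ω ∂P, Tendsto (fun k => uncertainLikelihoodRatio (N k ω) Z) atTop
      (nhds ((mBeta (fun _ : Fin M => (1 : ℝ)) / mBeta (fun i => ((Z i : ℝ) + 1))) *
        ∏ i, p i ^ (Z i))) :=
  uncertainLikelihoodRatio_tendsto_ae_general M hM p hp Z P S hSmeas hSindep hSdist N hN
end

section
/- Let M ≥ 1 and let Z, N, N' ∈ ℕ^M with N' = N + e_s for some s ∈ {1,...,M}, where e_s is the s-th standard basis vector. Let R = Σ_{i=1}^M Z_i and t = Σ_{i=1}^M N'_i. Then (Beta(Z + N' + 1)·Beta(N + 1)) / (Beta(N' + 1)·Beta(Z + N + 1)) = ((Z_s + N'_s)(M + t − 1)) / ((R + t + M − 1)·N'_s). -/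
open Finset Real

section

variable {ι : Type*} [Fintype ι] [DecidableEq ι]

lemma prod_Gamma_add_single {α : ι → ℝ} (s : ι) (hs : α s ≠ 0) :
    ∏ i, Gamma ((α + Pi.single s 1 : ι → ℝ) i) = α s * ∏ i, Gamma (α i) := by
  rw [Fintype.prod_eq_mul_prod_compl s, Fintype.prod_eq_mul_prod_compl s (fun i => Gamma (α i)),
    Pi.add_apply, Pi.single_eq_same, Gamma_add_one hs, mul_assoc]
  congr 2
  refine prod_congr rfl fun i hi => ?_
  rw [Pi.add_apply, Pi.single_eq_of_ne (by simpa using hi), add_zero]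

lemma sum_add_single {R : Type*} [AddCommMonoid R] (α : ι → R) (s : ι) (c : R) :
    ∑ i, (α + Pi.single s c : ι → R) i = ∑ i, α i + c := by
  simp [sum_add_distrib]

end

section

variable {M : ℕ} {α β : Fin M → ℝ}

lemma mBeta_pos [NeZero M] (hα : ∀ i, 0 < α i) : 0 < mBeta α :=
  div_pos (prod_pos fun i _ => Gamma_pos_of_pos (hα i))
    (Gamma_pos_of_pos (sum_pos (fun i _ => hα i) univ_nonempty))

lemma mBeta_add_single (hα : ∀ i, 0 < α i) (s : Fin M) :
    mBeta (α + Pi.single s 1) = α s / (∑ i, α i) * mBeta α := by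
  have hsum : 0 < ∑ i, α i := sum_pos (fun i _ => hα i) ⟨s, mem_univ s⟩
  rw [mBeta, mBeta, prod_Gamma_add_single s (hα s).ne', sum_add_single, Gamma_add_one hsum.ne']
  field_simp

lemma mBeta_add_single_mul_div (hα : ∀ i, 0 < α i) (hβ : ∀ i, 0 < β i) (s : Fin M) :
    mBeta (α + Pi.single s 1) * mBeta β / (mBeta (β + Pi.single s 1) * mBeta α) =
      α s * (∑ i, β i) / ((∑ i, α i) * β s) := by
  have : NeZero M := NeZero.of_pos s.pos
  have hα₀ := (mBeta_pos hα).ne'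
  have hβ₀ := (mBeta_pos hβ).ne'
  rw [mBeta_add_single hα, mBeta_add_single hβ]
  field_simp

end

theorem uncertainLikelihoodRatio_step_general
    (M : ℕ) (Z N N' : Fin M → ℕ) (s : Fin M)
    (hN' : N' = N + Pi.single s 1)
    (R t : ℕ) (hR : R = ∑ i, Z i) (ht : t = ∑ i, N' i) :
    (mBeta (fun i => ((Z i : ℝ) + (N' i : ℝ) + 1)) * mBeta (fun i => ((N i : ℝ) + 1))) /
        (mBeta (fun i => ((N' i : ℝ) + 1)) * mBeta (fun i => ((Z i : ℝ) + (N i : ℝ) + 1))) =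
      (((Z s : ℝ) + (N' s : ℝ)) * ((M : ℝ) + (t : ℝ) - 1)) /
        ((((R : ℝ) + (t : ℝ) + (M : ℝ) - 1)) * (N' s : ℝ)) := by
  set a : Fin M → ℝ := fun i => Z i + N i + 1
  set b : Fin M → ℝ := fun i => N i + 1
  have hN'_cast : (fun i => (N' i : ℝ)) = (fun i => (N i : ℝ)) + Pi.single s 1 := by
    ext i; rcases eq_or_ne i s with rfl | hi <;> simp [*]
  have hN's : (N' s : ℝ) = N s + 1 := by simpa using congrFun hN'_cast s
  have ht' : (t : ℝ) = ∑ i, (N i : ℝ) + 1 := by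
    rw [ht, Nat.cast_sum, ← sum_add_single, ← hN'_cast]
  have ha' : (fun i => (Z i : ℝ) + N' i + 1) = a + Pi.single s 1 := by
    ext i; simp [a, congrFun hN'_cast i]; ring
  have hb' : (fun i => (N' i : ℝ) + 1) = b + Pi.single s 1 := by
    ext i; simp [b, congrFun hN'_cast i]; ring
  have hsum_a : ∑ i, a i = R + t + M - 1 := by
    simp only [a, sum_add_distrib, sum_const, card_univ, Fintype.card_fin, nsmul_eq_mul, hR, ht',
      Nat.cast_sum]
    ring
  have hsum_b : ∑ i, b i = M + t - 1 := by
    simp only [b, sum_add_distrib, sum_const, card_univ, Fintype.card_fin, nsmul_eq_mul, ht']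
    ring
  have ha_s : a s = Z s + N' s := by simp only [a, hN's]; ring
  have hb_s : b s = N' s := by simp only [b, hN's]
  rw [ha', hb', mBeta_add_single_mul_div (fun i => by positivity) (fun i => by positivity),
    hsum_a, hsum_b, ha_s, hb_s]

/-- One-step identity for the uncertain likelihood ratio: if `N' = N + e_s`, then
`(Beta(Z+N'+1)·Beta(N+1)) / (Beta(N'+1)·Beta(Z+N+1))
  = ((Z_s + N'_s)(M + t − 1)) / ((R + t + M − 1)·N'_s)`,
where `R = Σ Z` and `t = Σ N'`. -/
theorem uncertainLikelihoodRatio_step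
    (M : ℕ) (hM : 1 ≤ M) (Z N N' : Fin M → ℕ) (s : Fin M)
    (hN' : N' = N + Pi.single s 1)
    (R t : ℕ) (hR : R = ∑ i, Z i) (ht : t = ∑ i, N' i) :
    (mBeta (fun i => ((Z i : ℝ) + (N' i : ℝ) + 1)) * mBeta (fun i => ((N i : ℝ) + 1))) /
        (mBeta (fun i => ((N' i : ℝ) + 1)) * mBeta (fun i => ((Z i : ℝ) + (N i : ℝ) + 1))) =
      (((Z s : ℝ) + (N' s : ℝ)) * ((M : ℝ) + (t : ℝ) - 1)) /
        ((((R : ℝ) + (t : ℝ) + (M : ℝ) - 1)) * (N' s : ℝ)) :=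
  uncertainLikelihoodRatio_step_general M Z N N' s hN' R t hR ht
end

section
/- Let M ≥ 2 and let p, q₁, q₂ ∈ (0,1)^M be probability vectors on {1,...,M} (each with entries summing to 1 and everywhere positive) such that D_KL(p ∥ q₁) < D_KL(p ∥ q₂). Let S_1, S_2, ... be i.i.d. random variables with P(S_k = i) = p_i. Define beliefs μ_k on the two-element hypothesis set {1, 2} by μ_0(1), μ_0(2) > 0 and the Bayesian recursion μ_{k+1}(θ) = q_θ(S_{k+1}) μ_k(θ) / (q₁(S_{k+1}) μ_k(1) + q₂(S_{k+1}) μ_k(2)). Then, almost surely, lim_{k→∞} μ_k(2) = 0. -/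
/-!
The log posterior odds of the second hypothesis against the first are the log prior odds plus the
sum of the log-likelihood ratios `log (q₁ s / q₀ s)` of the observations. By the strong law of
large numbers that sum grows like `k · (D_KL(p ∥ q₀) - D_KL(p ∥ q₁))`, which tends to `-∞`,
so the odds, and with them the belief in the second hypothesis, tend to `0`.
-/

open Filter MeasureTheory ProbabilityTheory

noncomputable def klDiv' {M : ℕ} (p q : Fin M → ℝ) : ℝ :=
  ∑ i, p i * Real.log (p i / q i)

open Finset Topology

lemma klDiv'_sub_klDiv' {M : ℕ} (p q₀ q₁ : Fin M → ℝ) (hq₀ : ∀ i, q₀ i ≠ 0)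
    (hq₁ : ∀ i, q₁ i ≠ 0) :
    klDiv' p q₀ - klDiv' p q₁ = ∑ i, p i * Real.log (q₁ i / q₀ i) := by
  rw [klDiv', klDiv', ← sum_sub_distrib]
  refine sum_congr rfl fun i _ => ?_
  rcases eq_or_ne (p i) 0 with hp | hp
  · simp [hp]
  rw [Real.log_div hp (hq₀ i), Real.log_div hp (hq₁ i), Real.log_div (hq₁ i) (hq₀ i)]
  ring

lemma tendsto_sum_atBot_of_tendsto_average {x : ℕ → ℝ} {L : ℝ} (hL : L < 0)
    (h : Tendsto (fun n : ℕ => (∑ j ∈ range n, x j) / n) atTop (𝓝 L)) :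
    Tendsto (fun n => ∑ j ∈ range n, x j) atTop atBot := by
  refine (tendsto_natCast_atTop_atTop.atTop_mul_neg hL h).congr' ?_
  filter_upwards [eventually_ne_atTop 0] with n hn
  field_simp

section Bayes

variable {α : Type*}

noncomputable def bayesUpdate (q : Fin 2 → α → ℝ) (a : α) (ν : Fin 2 → ℝ) : Fin 2 → ℝ :=
  fun θ => q θ a * ν θ / (q 0 a * ν 0 + q 1 a * ν 1)

variable {q : Fin 2 → α → ℝ} {a : α} {ν : Fin 2 → ℝ}

lemma bayesUpdate_pos (hq : ∀ θ, 0 < q θ a) (hν : ∀ θ, 0 < ν θ) (θ : Fin 2) :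
    0 < bayesUpdate q a ν θ :=
  div_pos (mul_pos (hq θ) (hν θ)) (add_pos (mul_pos (hq 0) (hν 0)) (mul_pos (hq 1) (hν 1)))

lemma bayesUpdate_zero_add_one (hq : ∀ θ, 0 < q θ a) (hν : ∀ θ, 0 < ν θ) :
    bayesUpdate q a ν 0 + bayesUpdate q a ν 1 = 1 := by
  have hden : 0 < q 0 a * ν 0 + q 1 a * ν 1 :=
    add_pos (mul_pos (hq 0) (hν 0)) (mul_pos (hq 1) (hν 1))
  rw [bayesUpdate, bayesUpdate, ← add_div, div_self hden.ne']

lemma bayesUpdate_one_le_odds (hq : ∀ θ, 0 < q θ a) (hν : ∀ θ, 0 < ν θ) :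
    bayesUpdate q a ν 1 ≤ bayesUpdate q a ν 1 / bayesUpdate q a ν 0 := by
  have h₀ := bayesUpdate_pos hq hν 0
  have h₁ := bayesUpdate_pos hq hν 1
  rw [le_div_iff₀ h₀]
  exact mul_le_of_le_one_right h₁.le (by linarith [bayesUpdate_zero_add_one hq hν])

lemma bayesUpdate_odds (hq : ∀ θ, 0 < q θ a) (hν : ∀ θ, 0 < ν θ) :
    bayesUpdate q a ν 1 / bayesUpdate q a ν 0 = q 1 a / q 0 a * (ν 1 / ν 0) := by
  have := (hq 0).ne'
  have := (hν 0).ne'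
  have hden : q 0 a * ν 0 + q 1 a * ν 1 ≠ 0 :=
    (add_pos (mul_pos (hq 0) (hν 0)) (mul_pos (hq 1) (hν 1))).ne'
  simp only [bayesUpdate]
  field_simp

variable {s : ℕ → α} {ν : ℕ → Fin 2 → ℝ}

lemma bayesUpdate_iterate_pos (hq : ∀ θ a, 0 < q θ a) (hν₀ : ∀ θ, 0 < ν 0 θ)
    (hν : ∀ k, ν (k + 1) = bayesUpdate q (s (k + 1)) (ν k)) (k : ℕ) (θ : Fin 2) :
    0 < ν k θ := by
  induction k generalizing θ with
  | zero => exact hν₀ θ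
  | succ k ih => rw [hν]; exact bayesUpdate_pos (fun θ => hq θ _) ih θ

lemma bayesUpdate_iterate_odds (hq : ∀ θ a, 0 < q θ a) (hν₀ : ∀ θ, 0 < ν 0 θ)
    (hν : ∀ k, ν (k + 1) = bayesUpdate q (s (k + 1)) (ν k)) (k : ℕ) :
    ν k 1 / ν k 0 =
      ν 0 1 / ν 0 0 * Real.exp (∑ j ∈ range k, Real.log (q 1 (s (j + 1)) / q 0 (s (j + 1)))) := by
  induction k with
  | zero => simp
  | succ k ih =>
    rw [hν, bayesUpdate_odds (fun θ => hq θ _) (bayesUpdate_iterate_pos hq hν₀ hν k), ih,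
      sum_range_succ, Real.exp_add, Real.exp_log (div_pos (hq 1 _) (hq 0 _))]
    ring

lemma tendsto_bayesUpdate_iterate_one (hq : ∀ θ a, 0 < q θ a) (hν₀ : ∀ θ, 0 < ν 0 θ)
    (hν : ∀ k, ν (k + 1) = bayesUpdate q (s (k + 1)) (ν k))
    (hllr : Tendsto (fun n => ∑ j ∈ range n, Real.log (q 1 (s (j + 1)) / q 0 (s (j + 1))))
      atTop atBot) :
    Tendsto (fun k => ν k 1) atTop (𝓝 0) := by
  have hodds : Tendsto (fun k => ν k 1 / ν k 0) atTop (𝓝 0) := by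
    refine Tendsto.congr (fun k => (bayesUpdate_iterate_odds hq hν₀ hν k).symm) ?_
    simpa using (Real.tendsto_exp_atBot.comp hllr).const_mul (ν 0 1 / ν 0 0)
  refine squeeze_zero' (.of_forall fun k => (bayesUpdate_iterate_pos hq hν₀ hν k 1).le) ?_ hodds
  filter_upwards [eventually_ge_atTop 1] with k hk
  obtain ⟨k, rfl⟩ := Nat.exists_eq_add_of_le' hk
  rw [hν]
  exact bayesUpdate_one_le_odds (fun θ => hq θ _) (bayesUpdate_iterate_pos hq hν₀ hν k)

end Bayes

section Finite

variable {Ω α : Type*} [MeasurableSpace Ω] {P : Measure Ω} [MeasurableSpace α]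
  [MeasurableSingletonClass α]

lemma identDistrib_of_measure_preimage_singleton [Countable α] {X Y : Ω → α}
    (hX : Measurable X) (hY : Measurable Y) (h : ∀ a, P {ω | X ω = a} = P {ω | Y ω = a}) :
    IdentDistrib X Y P P where
  aemeasurable_fst := hX.aemeasurable
  aemeasurable_snd := hY.aemeasurable
  map_eq := Measure.ext_of_singleton fun a => by
    rw [Measure.map_apply hX (measurableSet_singleton a),
      Measure.map_apply hY (measurableSet_singleton a)]
    exact h a

lemma integral_comp_eq_sum_measureReal [Fintype α] [IsFiniteMeasure P] {X : Ω → α}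
    (hX : Measurable X) (f : α → ℝ) :
    ∫ ω, f (X ω) ∂P = ∑ a, P.real {ω | X ω = a} * f a := by
  rw [← integral_map hX.aemeasurable (measurable_of_finite f).aestronglyMeasurable,
    integral_fintype .of_finite]
  refine sum_congr rfl fun a _ => ?_
  rw [smul_eq_mul, measureReal_def, Measure.map_apply hX (measurableSet_singleton a)]
  rfl

lemma ae_tendsto_average_comp_of_finite [Finite α] [IsFiniteMeasure P] {X : ℕ → Ω → α}
    (hX : ∀ k, Measurable (X k)) (hindep : Pairwise fun i j => X i ⟂ᵢ[P] X j)
    (hident : ∀ k, IdentDistrib (X k) (X 0) P P) (f : α → ℝ) :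
    ∀ᵐ ω ∂P, Tendsto (fun n : ℕ => (∑ j ∈ range n, f (X j ω)) / n) atTop
      (𝓝 (∫ ω, f (X 0 ω) ∂P)) := by
  have hf : Measurable f := measurable_of_finite f
  refine strong_law_ae_real (fun k ω => f (X k ω)) ?_ (fun i j hij => (hindep hij).comp hf hf)
    (fun k => (hident k).comp hf)
  exact (integrable_map_measure hf.aestronglyMeasurable (hX 0).aemeasurable).mp .of_finite

end Finite

theorem bayesian_belief_on_worse_hypothesis_tendsto_zero_general
    (M : ℕ)
    (p : Fin M → ℝ) (hp : ∀ i, 0 < p i ∧ p i < 1)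
    (q : Fin 2 → Fin M → ℝ) (hq : ∀ θ i, 0 < q θ i ∧ q θ i < 1)
    (hKL : klDiv' p (q 0) < klDiv' p (q 1))
    {Ω : Type*} [MeasurableSpace Ω] (P : Measure Ω) [IsProbabilityMeasure P]
    (S : ℕ → Ω → Fin M) (hSmeas : ∀ k, Measurable (S k))
    (hSindep : iIndepFun S P)
    (hSdist : ∀ k i, P {ω | S k ω = i} = ENNReal.ofReal (p i))
    (μ₀ : Fin 2 → ℝ) (hμ₀ : ∀ θ, 0 < μ₀ θ)
    (μ : ℕ → Ω → Fin 2 → ℝ) (hμ0 : ∀ ω θ, μ 0 ω θ = μ₀ θ)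
    (hμrec : ∀ k ω θ, μ (k + 1) ω θ =
      q θ (S (k + 1) ω) * μ k ω θ /
        (q 0 (S (k + 1) ω) * μ k ω 0 + q 1 (S (k + 1) ω) * μ k ω 1)) :
    ∀ᵐ ω ∂P, Tendsto (fun k => μ k ω 1) atTop (nhds 0) := by
  have hq_pos : ∀ θ i, 0 < q θ i := fun θ i => (hq θ i).1
  have hident : ∀ k, IdentDistrib (S (k + 1)) (S (0 + 1)) P P := fun k =>
    identDistrib_of_measure_preimage_singleton (hSmeas _) (hSmeas _) fun i => by
      rw [hSdist (k + 1) i, hSdist (0 + 1) i]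
  have hmean : ∫ ω, Real.log (q 1 (S 1 ω) / q 0 (S 1 ω)) ∂P =
      klDiv' p (q 0) - klDiv' p (q 1) := by
    rw [integral_comp_eq_sum_measureReal (hSmeas 1) fun i => Real.log (q 1 i / q 0 i),
      klDiv'_sub_klDiv' _ _ _ (fun i => (hq_pos 0 i).ne') (fun i => (hq_pos 1 i).ne')]
    simp only [measureReal_def, hSdist, ENNReal.toReal_ofReal (hp _).1.le]
  have hSLLN := ae_tendsto_average_comp_of_finite (fun k => hSmeas (k + 1))
    (fun i j hij => hSindep.indepFun (by omega)) hident fun i => Real.log (q 1 i / q 0 i)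
  filter_upwards [hSLLN] with ω hω
  rw [zero_add, hmean] at hω
  refine tendsto_bayesUpdate_iterate_one hq_pos (by simpa [hμ0] using hμ₀)
    (s := fun k => S k ω) (fun k => funext (hμrec k ω)) (tendsto_sum_atBot_of_tendsto_average ?_ hω)
  linarith

/-- Bayesian learning with two hypotheses whose likelihoods are `q 0` and `q 1`: if the
observations are i.i.d. with distribution `p` and `D_KL(p ∥ q 0) < D_KL(p ∥ q 1)`, then the
belief on the second hypothesis vanishes almost surely. -/
theorem bayesian_belief_on_worse_hypothesis_tendsto_zero
    (M : ℕ) (hM : 2 ≤ M)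
    (p : Fin M → ℝ) (hp : ∀ i, 0 < p i ∧ p i < 1) (hpsum : ∑ i, p i = 1)
    (q : Fin 2 → Fin M → ℝ) (hq : ∀ θ i, 0 < q θ i ∧ q θ i < 1)
    (hqsum : ∀ θ, ∑ i, q θ i = 1)
    (hKL : klDiv' p (q 0) < klDiv' p (q 1))
    {Ω : Type*} [MeasurableSpace Ω] (P : Measure Ω) [IsProbabilityMeasure P]
    (S : ℕ → Ω → Fin M) (hSmeas : ∀ k, Measurable (S k))
    (hSindep : iIndepFun S P)
    (hSdist : ∀ k i, P {ω | S k ω = i} = ENNReal.ofReal (p i))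
    (μ₀ : Fin 2 → ℝ) (hμ₀ : ∀ θ, 0 < μ₀ θ)
    (μ : ℕ → Ω → Fin 2 → ℝ) (hμ0 : ∀ ω θ, μ 0 ω θ = μ₀ θ)
    (hμrec : ∀ k ω θ, μ (k + 1) ω θ =
      q θ (S (k + 1) ω) * μ k ω θ /
        (q 0 (S (k + 1) ω) * μ k ω 0 + q 1 (S (k + 1) ω) * μ k ω 1)) :
    ∀ᵐ ω ∂P, Tendsto (fun k => μ k ω 1) atTop (nhds 0) :=
  bayesian_belief_on_worse_hypothesis_tendsto_zero_general M p hp q hq hKL P S hSmeas hSindep hSdist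
    μ₀ hμ₀ μ hμ0 hμrec
end

section
/- Let M ≥ 2. Let p* ∈ (0,1)^M with Σ_i p*_i = 1 and p* not equal to the uniform distribution (1/M,...,1/M), and let p₁ ∈ (0,1)^M with Σ_i (p₁)_i = 1. Consider the two-hypothesis set Θ = {θ₁, θ₂} with θ* = θ₂. For R₁, R₂ ∈ ℕ let Z₁ ~ Multinomial(p₁, R₁) and Z₂ ~ Multinomial(p*, R₂) be independent, defining random surrogate likelihoods q_{θ₁}(s) = ([Z₁]_s + 1)/(R₁ + M) and q_{θ₂}(s) = ([Z₂]_s + 1)/(R₂ + M). Independently of (Z₁, Z₂), let S_1, S_2, ... be i.i.d. with P(S_k = i) = p*_i, and define beliefs by μ_0(θ₁), μ_0(θ₂) > 0 and μ_{k+1}(θ) = q_θ(S_{k+1}) μ_k(θ) / (q_{θ₁}(S_{k+1}) μ_k(θ₁) + q_{θ₂}(S_{k+1}) μ_k(θ₂)). Then there exist finite R₁, R₂ ∈ ℕ such that P( lim_{k→∞} μ_k(θ*) = 0 ) > 0. -/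
/-!
Take `R₂ = 0`, so that the surrogate likelihood of the true hypothesis is uniform. Since `p*` is
not uniform, strict Jensen for `log` gives `∑ p*ᵢ log p*ᵢ > log (1/M)`, and surrogates built from
the counts `⌊N p*⌋` converge to `p*`, so some count vector `x₀` already satisfies
`∑ p*ᵢ log q_{x₀}(i) > log (1/M)`. With `R₁ = ∑ x₀`, the event `Z₁ = x₀` has positive probability,
and on it the log-likelihood ratio of `θ₂` against `θ₁` is a sum of i.i.d. terms of negative mean.
By the strong law it tends to `-∞` almost surely, which forces `μ_k(θ₂) → 0`.
-/

open Filter MeasureTheory ProbabilityTheory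

/-- The multinomial probability mass function with probabilities `p` and `R` trials,
evaluated at the count vector `x`. -/
noncomputable def multinomialPMF {M : ℕ} (p : Fin M → ℝ) (R : ℕ) (x : Fin M → ℕ) : ℝ :=
  if ∑ i, x i = R then
    ((R.factorial : ℝ) / ∏ i, ((x i).factorial : ℝ)) * ∏ i, p i ^ x i
  else 0

open Finset Real Topology

section Surrogate

variable {ι : Type*} [Fintype ι]

theorem log_inv_card_lt_sum_mul_log {p : ι → ℝ} (hp : ∀ i, 0 < p i) (hsum : ∑ i, p i = 1)
    (hne : p ≠ fun _ => (Fintype.card ι : ℝ)⁻¹) :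
    log (Fintype.card ι : ℝ)⁻¹ < ∑ i, p i * log (p i) := by
  have hnonconst : ∃ j ∈ univ, ∃ k ∈ univ, (p j)⁻¹ ≠ (p k)⁻¹ := by
    by_contra! hconst
    refine hne (funext fun k => ?_)
    have hpk : p = fun _ => p k :=
      funext fun i => inv_injective (hconst i (mem_univ _) k (mem_univ _))
    rw [hpk, sum_const, card_univ, nsmul_eq_mul] at hsum
    rw [eq_inv_of_mul_eq_one_right hsum]
  -- strict Jensen for `log` at the points `(p i)⁻¹` with weights `p i`
  have hjensen := strictConcaveOn_log_Ioi.lt_map_sum (fun i _ => hp i) hsum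
    (fun i _ => Set.mem_Ioi.mpr (inv_pos.mpr (hp i))) hnonconst
  simp only [smul_eq_mul, log_inv, mul_neg, sum_neg_distrib] at hjensen
  rwa [sum_congr rfl fun i _ => mul_inv_cancel₀ (hp i).ne', sum_const, card_univ, nsmul_one,
    neg_lt, ← log_inv] at hjensen

noncomputable def surrogate (x : ι → ℕ) (s : ι) : ℝ :=
  (x s + 1) / (∑ i, (x i : ℝ) + Fintype.card ι)

theorem surrogate_pos (x : ι → ℕ) (s : ι) : 0 < surrogate x s := by
  have : 0 < Fintype.card ι := Fintype.card_pos_iff.mpr ⟨s⟩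
  unfold surrogate
  positivity

theorem tendsto_surrogate_floor_mul {p : ι → ℝ} (hp : ∀ i, 0 ≤ p i)
    (hsum : ∑ i, p i = 1) (s : ι) :
    Tendsto (fun N : ℕ => surrogate (fun i => ⌊(N : ℝ) * p i⌋₊) s) atTop (𝓝 (p s)) := by
  have hfloor_le (N : ℕ) (i : ι) : (⌊(N : ℝ) * p i⌋₊ : ℝ) ≤ N * p i :=
    Nat.floor_le (mul_nonneg N.cast_nonneg (hp i))
  have hle_floor_add_one (N : ℕ) (i : ι) : (N : ℝ) * p i ≤ ⌊(N : ℝ) * p i⌋₊ + 1 :=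
    (Nat.lt_floor_add_one _).le
  have hsum_le (N : ℕ) : ∑ i, (⌊(N : ℝ) * p i⌋₊ : ℝ) ≤ N := by
    simpa [← mul_sum, hsum] using sum_le_sum fun i (_ : i ∈ univ) => hfloor_le N i
  have hle_sum (N : ℕ) : (N : ℝ) ≤ ∑ i, (⌊(N : ℝ) * p i⌋₊ : ℝ) + Fintype.card ι := by
    simpa [← mul_sum, hsum, sum_add_distrib] using
      sum_le_sum fun i (_ : i ∈ univ) => hle_floor_add_one N i
  have hlower : Tendsto (fun N : ℕ => p s * (N / (N + Fintype.card ι))) atTop (𝓝 (p s)) := by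
    simpa using (tendsto_natCast_div_add_atTop (Fintype.card ι : ℝ)).const_mul (p s)
  have hupper : Tendsto (fun N : ℕ => p s + 1 / N) atTop (𝓝 (p s)) := by
    simpa using tendsto_one_div_atTop_nhds_zero_nat.const_add (p s)
  refine tendsto_of_tendsto_of_tendsto_of_le_of_le' hlower hupper ?_ ?_ <;>
    filter_upwards [eventually_ge_atTop 1] with N hN <;>
    have hN : (0 : ℝ) < N := by exact_mod_cast hN
  · rw [mul_div_assoc', surrogate, mul_comm]
    exact div_le_div₀ (by positivity) (hle_floor_add_one N s) (hN.trans_le (hle_sum N))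
      (by linarith [hsum_le N])
  · calc surrogate _ s ≤ (N * p s + 1) / N :=
          div_le_div₀ (by positivity [hp s]) (by linarith [hfloor_le N s]) hN (hle_sum N)
      _ = p s + 1 / N := by field_simp

theorem exists_lt_sum_mul_log_surrogate {p : ι → ℝ} (hp : ∀ i, 0 < p i) (hsum : ∑ i, p i = 1)
    {c : ℝ} (hc : c < ∑ i, p i * log (p i)) :
    ∃ x : ι → ℕ, c < ∑ i, p i * log (surrogate x i) := by
  have hlim : Tendsto (fun N : ℕ => ∑ i, p i * log (surrogate (fun j => ⌊(N : ℝ) * p j⌋₊) i))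
      atTop (𝓝 (∑ i, p i * log (p i))) :=
    tendsto_finsetSum _ fun i _ => ((continuousAt_log (hp i).ne').tendsto.comp
      (tendsto_surrogate_floor_mul (fun j => (hp j).le) hsum i)).const_mul (p i)
  obtain ⟨N, hN⟩ := (hlim.eventually_const_lt hc).exists
  exact ⟨_, hN⟩

end Surrogate

theorem multinomialPMF_sum_pos {M : ℕ} {p : Fin M → ℝ} (hp : ∀ i, 0 < p i) (x : Fin M → ℕ) :
    0 < multinomialPMF p (∑ i, x i) x := by
  rw [multinomialPMF, if_pos rfl]
  have hfact : 0 < ∏ i, ((x i).factorial : ℝ) := prod_pos fun i _ => by positivity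
  have hpow : 0 < ∏ i, p i ^ x i := prod_pos fun i _ => pow_pos (hp i) _
  positivity

theorem multinomialPMF_zero {M : ℕ} (p : Fin M → ℝ) : multinomialPMF p 0 0 = 1 := by
  simp [multinomialPMF]

theorem tendsto_atBot_of_tendsto_div_natCast {a : ℕ → ℝ} {m : ℝ} (hm : m < 0)
    (h : Tendsto (fun n : ℕ => a n / n) atTop (𝓝 m)) : Tendsto a atTop atBot := by
  have hlin : Tendsto (fun n : ℕ => m / 2 * n) atTop atBot :=
    tendsto_natCast_atTop_atTop.const_mul_atTop_of_neg (by linarith)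
  refine tendsto_atBot_mono' _ ?_ hlin
  filter_upwards [h.eventually_lt_const (by linarith : m < m / 2), eventually_ge_atTop 1]
    with n hn hn1
  have hn0 : (0 : ℝ) < n := by exact_mod_cast hn1
  rw [div_lt_iff₀ hn0] at hn
  exact hn.le

theorem ae_tendsto_sum_atBot_of_integral_neg {Ω : Type*} [MeasurableSpace Ω] {P : Measure Ω}
    {X : ℕ → Ω → ℝ} (hint : Integrable (X 0) P)
    (hindep : Pairwise (Function.onFun (IndepFun · · P) X))
    (hident : ∀ i, IdentDistrib (X i) (X 0) P P) (hneg : P[X 0] < 0) :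
    ∀ᵐ ω ∂P, Tendsto (fun n => ∑ i ∈ range n, X i ω) atTop atBot := by
  filter_upwards [strong_law_ae_real X hint hindep hident] with ω hω
  exact tendsto_atBot_of_tendsto_div_natCast hneg hω

section FiniteLaw

variable {Ω α : Type*} [MeasurableSpace Ω] {P : Measure Ω} [Fintype α] [MeasurableSpace α]
  [MeasurableSingletonClass α] {p : α → ℝ}

theorem integral_comp_eq_sum_of_measure_eq [IsFiniteMeasure P] {S : Ω → α} (hS : Measurable S)
    (hlaw : ∀ a, P {ω | S ω = a} = ENNReal.ofReal (p a)) (hp : ∀ a, 0 ≤ p a) (f : α → ℝ) :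
    ∫ ω, f (S ω) ∂P = ∑ a, p a * f a := by
  rw [← integral_map hS.aemeasurable (measurable_of_finite f).aestronglyMeasurable,
    integral_fintype .of_finite]
  refine sum_congr rfl fun a _ => ?_
  rw [measureReal_def, Measure.map_apply hS (measurableSet_singleton a)]
  simp [Set.preimage, hlaw, hp a]

theorem ae_tendsto_sum_comp_atBot [IsFiniteMeasure P] {S : ℕ → Ω → α}
    (hS : ∀ k, Measurable (S k)) (hindep : Pairwise fun i j => IndepFun (S i) (S j) P)
    (hlaw : ∀ k a, P {ω | S k ω = a} = ENNReal.ofReal (p a)) (hp : ∀ a, 0 ≤ p a)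
    {f : α → ℝ} (hf : ∑ a, p a * f a < 0) :
    ∀ᵐ ω ∂P, Tendsto (fun n => ∑ i ∈ range n, f (S i ω)) atTop atBot := by
  have hf_meas : Measurable f := measurable_of_finite f
  have hident (i : ℕ) : IdentDistrib (S i) (S 0) P P :=
    ⟨(hS i).aemeasurable, (hS 0).aemeasurable, Measure.ext_of_singleton fun a => by
      simp only [Measure.map_apply (hS _) (measurableSet_singleton a)]
      exact (hlaw i a).trans (hlaw 0 a).symm⟩
  refine ae_tendsto_sum_atBot_of_integral_neg (X := fun k ω => f (S k ω)) ?_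
    (fun i j hij => (hindep hij).comp hf_meas hf_meas) (fun i => (hident i).comp hf_meas) ?_
  · exact (integrable_map_measure hf_meas.aestronglyMeasurable (hS 0).aemeasurable).mp .of_finite
  · rwa [integral_comp_eq_sum_of_measure_eq (hS 0) (hlaw 0) hp]

end FiniteLaw

def IsBayesUpdate {α : Type*} (ℓ : Fin 2 → α → ℝ) (s : ℕ → α) (μ : ℕ → Fin 2 → ℝ) : Prop :=
  ∀ k θ, μ (k + 1) θ =
    ℓ θ (s (k + 1)) * μ k θ / (ℓ 0 (s (k + 1)) * μ k 0 + ℓ 1 (s (k + 1)) * μ k 1)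

namespace IsBayesUpdate

variable {α : Type*} {ℓ : Fin 2 → α → ℝ} {s : ℕ → α} {μ : ℕ → Fin 2 → ℝ}
  (hμ : IsBayesUpdate ℓ s μ) (hℓ : ∀ θ a, 0 < ℓ θ a) (hμ₀ : ∀ θ, 0 < μ 0 θ)
include hμ hℓ hμ₀

theorem pos (k : ℕ) (θ : Fin 2) : 0 < μ k θ := by
  induction k generalizing θ with
  | zero => exact hμ₀ θ
  | succ k ih =>
    rw [hμ]
    exact div_pos (mul_pos (hℓ _ _) (ih θ))
      (add_pos (mul_pos (hℓ _ _) (ih 0)) (mul_pos (hℓ _ _) (ih 1)))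

theorem succ_le_one (k : ℕ) (θ : Fin 2) : μ (k + 1) θ ≤ 1 := by
  have h0 := mul_pos (hℓ 0 (s (k + 1))) (hμ.pos hℓ hμ₀ k 0)
  have h1 := mul_pos (hℓ 1 (s (k + 1))) (hμ.pos hℓ hμ₀ k 1)
  rw [hμ, div_le_one (add_pos h0 h1)]
  fin_cases θ <;> simp only [Fin.zero_eta, Fin.mk_one] <;> linarith

theorem ratio_eq (k : ℕ) : μ k 1 / μ k 0 =
    μ 0 1 / μ 0 0 * exp (∑ i ∈ range k, log (ℓ 1 (s (i + 1)) / ℓ 0 (s (i + 1)))) := by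
  induction k with
  | zero => simp
  | succ k ih =>
    have hden := add_pos (mul_pos (hℓ 0 (s (k + 1))) (hμ.pos hℓ hμ₀ k 0))
      (mul_pos (hℓ 1 (s (k + 1))) (hμ.pos hℓ hμ₀ k 1))
    rw [sum_range_succ, exp_add, exp_log (div_pos (hℓ 1 _) (hℓ 0 _)), ← mul_assoc, ← ih,
      hμ k 1, hμ k 0, div_div_div_cancel_right₀ hden.ne']
    have := (hℓ 0 (s (k + 1))).ne'; have := (hμ.pos hℓ hμ₀ k 0).ne'
    field_simp

theorem tendsto_zero_of_tendsto_atBot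
    (h : Tendsto (fun n => ∑ i ∈ range n, log (ℓ 1 (s (i + 1)) / ℓ 0 (s (i + 1))))
      atTop atBot) :
    Tendsto (fun k => μ k 1) atTop (𝓝 0) := by
  have hratio : Tendsto (fun k => μ k 1 / μ k 0) atTop (𝓝 0) := by
    rw [funext (hμ.ratio_eq hℓ hμ₀)]
    simpa using (tendsto_exp_atBot.comp h).const_mul (μ 0 1 / μ 0 0)
  refine squeeze_zero' (.of_forall fun k => (hμ.pos hℓ hμ₀ k 1).le) ?_ hratio
  filter_upwards [eventually_ge_atTop 1] with k hk
  obtain ⟨k, rfl⟩ := Nat.exists_eq_add_of_le' hk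
  exact le_div_self (hμ.pos hℓ hμ₀ _ 1).le (hμ.pos hℓ hμ₀ _ 0) (hμ.succ_le_one hℓ hμ₀ k 0)

end IsBayesUpdate

theorem bayesian_with_surrogates_discards_truth_general
    (M : ℕ) (hM : 2 ≤ M)
    (pstar : Fin M → ℝ) (hpstar : ∀ i, 0 < pstar i ∧ pstar i < 1)
    (hpstarsum : ∑ i, pstar i = 1) (hne : pstar ≠ fun _ => (M : ℝ)⁻¹)
    (p₁ : Fin M → ℝ) (hp₁ : ∀ i, 0 < p₁ i ∧ p₁ i < 1) :
    ∃ R₁ R₂ : ℕ,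
      ∀ (Ω : Type) (_ : MeasurableSpace Ω) (P : Measure Ω), IsProbabilityMeasure P →
        ∀ (Z₁ Z₂ : Ω → Fin M → ℕ), Measurable Z₁ → Measurable Z₂ →
          IndepFun Z₁ Z₂ P →
          (∀ x : Fin M → ℕ, P {ω | Z₁ ω = x} = ENNReal.ofReal (multinomialPMF p₁ R₁ x)) →
          (∀ x : Fin M → ℕ, P {ω | Z₂ ω = x} = ENNReal.ofReal (multinomialPMF pstar R₂ x)) →
          ∀ (S : ℕ → Ω → Fin M), (∀ k, Measurable (S k)) →
            iIndepFun S P →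
            (∀ k i, P {ω | S k ω = i} = ENNReal.ofReal (pstar i)) →
            IndepFun (fun ω => (Z₁ ω, Z₂ ω)) (fun ω => fun k => S k ω) P →
            ∀ (q : Ω → Fin 2 → Fin M → ℝ),
              (∀ ω s, q ω 0 s = ((Z₁ ω s : ℝ) + 1) / ((R₁ : ℝ) + (M : ℝ))) →
              (∀ ω s, q ω 1 s = ((Z₂ ω s : ℝ) + 1) / ((R₂ : ℝ) + (M : ℝ))) →
              ∀ (μ₀ : Fin 2 → ℝ), (∀ θ, 0 < μ₀ θ) →
                ∀ (μ : ℕ → Ω → Fin 2 → ℝ), (∀ ω θ, μ 0 ω θ = μ₀ θ) →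
                  (∀ k ω θ, μ (k + 1) ω θ =
                    q ω θ (S (k + 1) ω) * μ k ω θ /
                      (q ω 0 (S (k + 1) ω) * μ k ω 0 + q ω 1 (S (k + 1) ω) * μ k ω 1)) →
                  0 < P {ω | Tendsto (fun k => μ k ω 1) atTop (nhds 0)} := by
  have hMpos : (0 : ℝ) < M := by norm_cast; omega
  have hgibbs : log (M : ℝ)⁻¹ < ∑ i, pstar i * log (pstar i) := by
    simpa using log_inv_card_lt_sum_mul_log (fun i => (hpstar i).1) hpstarsum (by simpa using hne)
  obtain ⟨x₀, hx₀⟩ := exists_lt_sum_mul_log_surrogate (fun i => (hpstar i).1) hpstarsum hgibbs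
  refine ⟨∑ i, x₀ i, 0, fun Ω _ P _ Z₁ Z₂ _ _ hZ hZ₁ hZ₂ S hS hSindep hSlaw _ q hq₀ hq₁ μ₀ hμ₀
    μ hμinit hμ => ?_⟩
  have hA : 0 < P (Z₁ ⁻¹' {x₀} ∩ Z₂ ⁻¹' {0}) := by
    rw [hZ.measure_inter_preimage_eq_mul _ _ (measurableSet_singleton x₀)
      (measurableSet_singleton 0), Set.preimage, Set.preimage]
    simp only [Set.mem_singleton_iff, hZ₁, hZ₂, multinomialPMF_zero]
    simpa using multinomialPMF_sum_pos (fun i => (hp₁ i).1) x₀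
  have hdrift : ∀ᵐ ω ∂P, Tendsto (fun n => ∑ i ∈ range n,
      log ((M : ℝ)⁻¹ / surrogate x₀ (S (i + 1) ω))) atTop atBot := by
    refine ae_tendsto_sum_comp_atBot (S := fun k => S (k + 1))
      (f := fun a => log ((M : ℝ)⁻¹ / surrogate x₀ a)) (fun k => hS (k + 1))
      (fun i j hij => hSindep.indepFun (by simpa using hij)) (fun k => hSlaw (k + 1))
      (fun i => (hpstar i).1.le) ?_
    simp only [log_div (inv_pos.mpr hMpos).ne' (surrogate_pos x₀ _).ne', mul_sub,
      sum_sub_distrib, ← sum_mul, hpstarsum, one_mul]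
    linarith
  refine hA.trans_le (measure_mono_ae ?_)
  filter_upwards [hdrift] with ω hω ⟨hZ₁ω, hZ₂ω⟩
  have hq₀ω : q ω 0 = surrogate x₀ := by
    ext s; simp [hq₀, surrogate, show Z₁ ω = x₀ from hZ₁ω]
  have hq₁ω : q ω 1 = fun _ => (M : ℝ)⁻¹ := by
    ext s; simp [hq₁, show Z₂ ω = 0 from hZ₂ω]
  have hqpos : ∀ θ a, 0 < q ω θ a := by
    intro θ a; fin_cases θ <;> simp [hq₀ω, hq₁ω, surrogate_pos, hMpos]
  refine IsBayesUpdate.tendsto_zero_of_tendsto_atBot (ℓ := q ω) (s := fun k => S k ω)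
    (fun k θ => hμ k ω θ) hqpos (by simpa [hμinit] using hμ₀) ?_
  simpa only [hq₀ω, hq₁ω] using hω

/-- Bayesian social learning with surrogate likelihoods built from finite prior evidence may
discard the true hypothesis: there exist finite `R₁, R₂` such that the belief on the true
hypothesis `θ₂` converges to zero with positive probability. -/
theorem bayesian_with_surrogates_discards_truth
    (M : ℕ) (hM : 2 ≤ M)
    (pstar : Fin M → ℝ) (hpstar : ∀ i, 0 < pstar i ∧ pstar i < 1)
    (hpstarsum : ∑ i, pstar i = 1) (hne : pstar ≠ fun _ => (M : ℝ)⁻¹)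
    (p₁ : Fin M → ℝ) (hp₁ : ∀ i, 0 < p₁ i ∧ p₁ i < 1) (hp₁sum : ∑ i, p₁ i = 1) :
    ∃ R₁ R₂ : ℕ,
      ∀ (Ω : Type) (_ : MeasurableSpace Ω) (P : Measure Ω), IsProbabilityMeasure P →
        ∀ (Z₁ Z₂ : Ω → Fin M → ℕ), Measurable Z₁ → Measurable Z₂ →
          IndepFun Z₁ Z₂ P →
          (∀ x : Fin M → ℕ, P {ω | Z₁ ω = x} = ENNReal.ofReal (multinomialPMF p₁ R₁ x)) →
          (∀ x : Fin M → ℕ, P {ω | Z₂ ω = x} = ENNReal.ofReal (multinomialPMF pstar R₂ x)) →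
          ∀ (S : ℕ → Ω → Fin M), (∀ k, Measurable (S k)) →
            iIndepFun S P →
            (∀ k i, P {ω | S k ω = i} = ENNReal.ofReal (pstar i)) →
            IndepFun (fun ω => (Z₁ ω, Z₂ ω)) (fun ω => fun k => S k ω) P →
            ∀ (q : Ω → Fin 2 → Fin M → ℝ),
              (∀ ω s, q ω 0 s = ((Z₁ ω s : ℝ) + 1) / ((R₁ : ℝ) + (M : ℝ))) →
              (∀ ω s, q ω 1 s = ((Z₂ ω s : ℝ) + 1) / ((R₂ : ℝ) + (M : ℝ))) →
              ∀ (μ₀ : Fin 2 → ℝ), (∀ θ, 0 < μ₀ θ) →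
                ∀ (μ : ℕ → Ω → Fin 2 → ℝ), (∀ ω θ, μ 0 ω θ = μ₀ θ) →
                  (∀ k ω θ, μ (k + 1) ω θ =
                    q ω θ (S (k + 1) ω) * μ k ω θ /
                      (q ω 0 (S (k + 1) ω) * μ k ω 0 + q ω 1 (S (k + 1) ω) * μ k ω 1)) →
                  0 < P {ω | Tendsto (fun k => μ k ω 1) atTop (nhds 0)} :=
  bayesian_with_surrogates_discards_truth_general M hM pstar hpstar hpstarsum hne p₁ hp₁
end
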